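/- arXiv:2410.23029 — 5 statements merged into one kernel-verified Lean document; each statement's English description precedes it below -/
import Mathlib

section
/- Let X be a finite linearly ordered set and let A = {0,1} with 0 ≤ 1. Let g : X × A → ℝ be nonnegative, nondecreasing in x ∈ X for each a ∈ A, nondecreasing in a ∈ A for each x ∈ X, and superadditive on X × A (i.e., g(x₁, a₁) + g(x₂, a₂) ≥ g(x₁, a₂) + g(x₂, a₁) whenever x₁ ≥ x₂ and a₁ ≥ a₂). Let r : X → ℝ be nondecreasing, and fix s' ∈ ℝ and ψ' ∈ ℝ. Define q̂((x, s, ψ), a) := 𝟙(ψ' ≤ ψ)·𝟙(s' ≤ s + r(x))·g(x, a) for x ∈ X and s, ψ ∈ ℝ, a ∈ A. Then q̂ is superadditive: for all x₁ ≥ x₂ in X, s₁ ≥ s₂, ψ₁ ≥ ψ₂ in ℝ and a₁ ≥ a₂ in A, q̂((x₁, s₁, ψ₁), a₁) + q̂((x₂, s₂, ψ₂), a₂) ≥ q̂((x₁, s₁, ψ₁), a₂) + q̂((x₂, s₂, ψ₂), a₁). -/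
/-- Superadditivity of the augmented tail kernel
`q̂((x,s,ψ),a) = 𝟙(ψ' ≤ ψ)·𝟙(s' ≤ s + r x)·g(x,a)` on the product of the
(componentwise ordered) augmented state space and the action set `{0,1}`
(formalized as `Fin 2`), when `g` is nonnegative, nondecreasing in each
argument, and superadditive on `X × A`, and `r` is nondecreasing. -/
theorem augmented_tail_superadditive
    {X : Type*} [Fintype X] [LinearOrder X]
    (g : X → Fin 2 → ℝ)
    (hg0 : ∀ x a, 0 ≤ g x a)
    (hgx : ∀ a, Monotone fun x => g x a)
    (hga : ∀ x, Monotone fun a => g x a)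
    (hgsup : ∀ (x₁ x₂ : X) (a₁ a₂ : Fin 2), x₂ ≤ x₁ → a₂ ≤ a₁ →
      g x₁ a₂ + g x₂ a₁ ≤ g x₁ a₁ + g x₂ a₂)
    (r : X → ℝ) (hr : Monotone r)
    (s' ψ' : ℝ)
    (x₁ x₂ : X) (s₁ s₂ ψ₁ ψ₂ : ℝ) (a₁ a₂ : Fin 2)
    (hx : x₂ ≤ x₁) (hs : s₂ ≤ s₁) (hψ : ψ₂ ≤ ψ₁) (ha : a₂ ≤ a₁) :
    (if ψ' ≤ ψ₁ then (1 : ℝ) else 0) * (if s' ≤ s₁ + r x₁ then 1 else 0) * g x₁ a₂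
      + (if ψ' ≤ ψ₂ then (1 : ℝ) else 0) * (if s' ≤ s₂ + r x₂ then 1 else 0) * g x₂ a₁
    ≤ (if ψ' ≤ ψ₁ then (1 : ℝ) else 0) * (if s' ≤ s₁ + r x₁ then 1 else 0) * g x₁ a₁
      + (if ψ' ≤ ψ₂ then (1 : ℝ) else 0) * (if s' ≤ s₂ + r x₂ then 1 else 0) * g x₂ a₂ := by
  have h1 : ψ' ≤ ψ₂ → ψ' ≤ ψ₁ := fun h => h.trans hψ
  have h2 : s' ≤ s₂ + r x₂ → s' ≤ s₁ + r x₁ := fun h => h.trans (add_le_add hs (hr hx))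
  have h3 := hga x₁ ha
  have h4 := hga x₂ ha
  have h5 := hgsup x₁ x₂ a₁ a₂ hx ha
  split_ifs <;> simp_all <;> linarith
end

section
/- Let 𝒳 be a finite set with |𝒳| = d ≥ 1, let P be a probability mass function on 𝒳, let ℓ ≥ 1, and let X₁, …, X_ℓ be independent random variables each distributed according to P. Let P̂(x) := (1/ℓ)·#{j ≤ ℓ : X_j = x} be the empirical distribution. Then for every ε > 0, the probability that ∑_{x ∈ 𝒳} |P(x) − P̂(x)| ≥ ε is at most 2^d · exp(−ℓ ε² / 2). -/
/-!
The ℓ¹ distance between two probability vectors is twice the largest excess `P̂(A) - P(A)` over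
subsets `A`, attained at `A = {P ≤ P̂}`. Hence the deviation event is covered by the `2 ^ d` events
`ℓ P̂(A) ≥ ℓ P(A) + ℓ ε / 2`, and for each fixed `A` Hoeffding's inequality for the `ℓ` independent
indicators of `X_j ∈ A` bounds the probability of that event by `exp (-ℓ ε² / 2)`.
-/

open MeasureTheory ProbabilityTheory Finset

theorem sum_abs_sub_eq_two_mul_sum_filter_le {α : Type*} (s : Finset α) (f g : α → ℝ)
    (h : ∑ x ∈ s, f x = ∑ x ∈ s, g x) :
    ∑ x ∈ s, |f x - g x| = 2 * ∑ x ∈ s with f x ≤ g x, (g x - f x) := by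
  have habs : ∀ x, |f x - g x| = 2 * max (g x - f x) 0 - (g x - f x) := by
    intro x
    rcases le_total (f x) (g x) with hfg | hgf
    · rw [abs_of_nonpos (by linarith), max_eq_left (by linarith)]; ring
    · rw [abs_of_nonneg (by linarith), max_eq_right (by linarith)]; ring
  have hmax : ∀ x, max (g x - f x) 0 = if f x ≤ g x then g x - f x else 0 := by
    intro x
    split_ifs with hfg
    · exact max_eq_left (by linarith)
    · exact max_eq_right (by linarith)
  simp only [habs, sum_sub_distrib, ← mul_sum, hmax, ← sum_filter, h, sub_self, sub_zero]

section Empirical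

variable {ι α : Type*} [Fintype ι] [DecidableEq α]

noncomputable def empiricalDist (y : ι → α) (x : α) : ℝ :=
  #{j | y j = x} / Fintype.card ι

theorem sum_empiricalDist (y : ι → α) (A : Finset α) :
    ∑ x ∈ A, empiricalDist y x = #{j | y j ∈ A} / Fintype.card ι := by
  have hfib : #{j | y j ∈ A} = ∑ x ∈ A, #{j | y j = x} := by
    rw [card_eq_sum_card_fiberwise (s := {j | y j ∈ A}) (t := A) (f := y)
      (fun j hj => (mem_filter.mp hj).2)]
    refine sum_congr rfl fun x hx => congrArg card ?_
    ext j
    simp only [mem_filter, mem_univ, true_and, and_iff_right_iff_imp]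
    exact fun h => h ▸ hx
  simp only [empiricalDist, ← sum_div, hfib, Nat.cast_sum]

theorem sum_univ_empiricalDist [Fintype α] [Nonempty ι] (y : ι → α) :
    ∑ x, empiricalDist y x = 1 := by
  rw [sum_empiricalDist, filter_true_of_mem (fun j _ => mem_univ (y j)), card_univ,
    div_self (Nat.cast_ne_zero.mpr Fintype.card_ne_zero)]

theorem exists_le_card_of_le_sum_abs_sub_empiricalDist [Fintype α] [Nonempty ι]
    {P : α → ℝ} (hP : ∑ x, P x = 1) (y : ι → α) {ε : ℝ}
    (h : ε ≤ ∑ x, |P x - empiricalDist y x|) :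
    ∃ A : Finset α, Fintype.card ι * ∑ x ∈ A, P x + Fintype.card ι * ε / 2 ≤ #{j | y j ∈ A} := by
  rw [sum_abs_sub_eq_two_mul_sum_filter_le _ _ _ (hP.trans (sum_univ_empiricalDist y).symm),
    sum_sub_distrib, sum_empiricalDist] at h
  set A : Finset α := {x | P x ≤ empiricalDist y x}
  have hn : (0 : ℝ) < Fintype.card ι := Nat.cast_pos.mpr Fintype.card_pos
  refine ⟨A, ?_⟩
  calc Fintype.card ι * ∑ x ∈ A, P x + Fintype.card ι * ε / 2
      = Fintype.card ι * ∑ x ∈ A, P x + Fintype.card ι * (ε / 2) := by ring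
    _ ≤ Fintype.card ι * ∑ x ∈ A, P x +
          Fintype.card ι * (#{j | y j ∈ A} / Fintype.card ι - ∑ x ∈ A, P x) := by
        gcongr; linarith
    _ = #{j | y j ∈ A} := by field_simp; ring

end Empirical

theorem measureReal_card_mem_ge_le_exp {ι α Ω : Type*} [Fintype ι] [MeasurableSpace α]
    [MeasurableSpace Ω] {μ : Measure Ω} [IsProbabilityMeasure μ] {X : ι → Ω → α} (hX : ∀ j, Measurable (X j))
    (hindep : iIndepFun X μ) {s : Set α} [DecidablePred (· ∈ s)] (hs : MeasurableSet s)
    {p : ℝ} (hp : ∀ j, μ.real (X j ⁻¹' s) = p) {t : ℝ} (ht : 0 ≤ t) :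
    μ.real {ω | Fintype.card ι * p + t ≤ #{j | X j ω ∈ s}} ≤
      Real.exp (-2 * t ^ 2 / Fintype.card ι) := by
  have hind : Measurable (s.indicator (1 : α → ℝ)) := measurable_one.indicator hs
  set Y : ι → Ω → ℝ := fun j ω => s.indicator 1 (X j ω) - p
  have hY_subG (j : ι) : HasSubgaussianMGF (Y j) ((‖(1 : ℝ) - 0‖₊ / 2) ^ 2) μ := by
    have hmean : μ[s.indicator 1 ∘ X j] = p := by
      have hcomp : s.indicator 1 ∘ X j = (X j ⁻¹' s).indicator (1 : Ω → ℝ) := rfl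
      rw [hcomp, integral_indicator_one (hs.preimage (hX j)), hp]
    have hIcc : ∀ ω, s.indicator (1 : α → ℝ) (X j ω) ∈ Set.Icc 0 1 := fun ω => by
      by_cases h : X j ω ∈ s <;> simp [h]
    have h := hasSubgaussianMGF_of_mem_Icc (hind.comp (hX j)).aemeasurable (ae_of_all μ hIcc)
    rwa [hmean] at h
  have hY_indep : iIndepFun Y μ := hindep.comp _ fun _ => hind.sub_const p
  have hsum := HasSubgaussianMGF.measure_sum_ge_le_of_iIndepFun hY_indep (s := univ)
    (fun j _ => hY_subG j) ht
  have hcount (ω : Ω) : (#{j | X j ω ∈ s} : ℝ) = ∑ j, s.indicator 1 (X j ω) := by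
    simp only [natCast_card_filter, Set.indicator_apply, Pi.one_apply]
  calc μ.real {ω | Fintype.card ι * p + t ≤ #{j | X j ω ∈ s}}
      = μ.real {ω | t ≤ ∑ j, Y j ω} := by
        congr 1; ext ω
        simp only [Set.mem_ofPred_eq, Y, sum_sub_distrib, hcount, sum_const, card_univ,
          nsmul_eq_mul]
        constructor <;> intro h <;> linarith
    _ ≤ _ := hsum
    _ = Real.exp (-2 * t ^ 2 / Fintype.card ι) := by
        congr 1
        simp only [sum_const, card_univ, nsmul_eq_mul, sub_zero, nnnorm_one, NNReal.coe_mul,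
          NNReal.coe_natCast, NNReal.coe_pow, NNReal.coe_div, NNReal.coe_one, NNReal.coe_ofNat]
        ring

theorem weissman_l1_deviation_general
    {Ω : Type*} [MeasureSpace Ω] [IsProbabilityMeasure (ℙ : Measure Ω)]
    {𝒳 : Type*} [Fintype 𝒳] [DecidableEq 𝒳] [MeasurableSpace 𝒳]
    [MeasurableSingletonClass 𝒳]
    (d : ℕ) (hcard : Fintype.card 𝒳 = d)
    (P : 𝒳 → ℝ) (hP1 : ∑ x, P x = 1)
    (ℓ : ℕ) (hℓ : 1 ≤ ℓ) (X : Fin ℓ → Ω → 𝒳)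
    (hmeas : ∀ j, Measurable (X j))
    (hindep : iIndepFun X ℙ)
    (hdist : ∀ j x, (ℙ {ω | X j ω = x}).toReal = P x)
    (ε : ℝ) (hε : 0 < ε) :
    (ℙ {ω | ε ≤ ∑ x, |P x -
        ((Finset.univ.filter (fun j => X j ω = x)).card : ℝ) / (ℓ : ℝ)|}).toReal
      ≤ 2 ^ d * Real.exp (-(ℓ : ℝ) * ε ^ 2 / 2) := by
  have : Nonempty (Fin ℓ) := Fin.pos_iff_nonempty.mp hℓ
  have hprob (j : Fin ℓ) (A : Finset 𝒳) : (ℙ : Measure Ω).real (X j ⁻¹' A) = ∑ x ∈ A, P x := by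
    rw [← sum_measureReal_preimage_singleton A fun x _ => hmeas j (measurableSet_singleton x)]
    exact sum_congr rfl fun x _ => hdist j x
  have hcover : {ω | ε ≤ ∑ x, |P x - (#{j | X j ω = x} : ℝ) / ℓ|} ⊆
      ⋃ A : Finset 𝒳, {ω | ℓ * ∑ x ∈ A, P x + ℓ * ε / 2 ≤ #{j | X j ω ∈ A}} := fun ω hω => by
    simpa only [Set.mem_iUnion, Set.mem_ofPred_eq, Fintype.card_fin] using
      exists_le_card_of_le_sum_abs_sub_empiricalDist hP1 (fun j => X j ω)
        (by simpa only [Set.mem_ofPred_eq, empiricalDist, Fintype.card_fin] using hω)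
  calc (ℙ : Measure Ω).real {ω | ε ≤ ∑ x, |P x - (#{j | X j ω = x} : ℝ) / ℓ|}
      ≤ ∑ A : Finset 𝒳,
          (ℙ : Measure Ω).real {ω | ℓ * ∑ x ∈ A, P x + ℓ * ε / 2 ≤ #{j | X j ω ∈ A}} :=
        (measureReal_mono hcover).trans (measureReal_iUnion_fintype_le _)
    _ ≤ ∑ _A : Finset 𝒳, Real.exp (-(ℓ : ℝ) * ε ^ 2 / 2) := sum_le_sum fun A _ => by
        have := measureReal_card_mem_ge_le_exp hmeas hindep A.measurableSet (hprob · A)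
          (t := ℓ * ε / 2) (by positivity)
        simp only [Fintype.card_fin, Finset.mem_coe] at this
        rwa [show -(ℓ : ℝ) * ε ^ 2 / 2 = -2 * (ℓ * ε / 2) ^ 2 / ℓ by field_simp]
    _ = 2 ^ d * Real.exp (-(ℓ : ℝ) * ε ^ 2 / 2) := by
        rw [sum_const, card_univ, Fintype.card_finset, hcard, nsmul_eq_mul, Nat.cast_pow,
          Nat.cast_ofNat]

/-- Weissman et al.'s L1-deviation inequality: if `X₁, …, X_ℓ` are i.i.d.
samples from a probability mass function `P` on a finite set of cardinality
`d ≥ 1`, and `P̂` is the empirical distribution, then for every `ε > 0`,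
`ℙ(‖P − P̂‖₁ ≥ ε) ≤ 2^d · exp(−ℓ ε² / 2)`. -/
theorem weissman_l1_deviation
    {Ω : Type*} [MeasureSpace Ω] [IsProbabilityMeasure (ℙ : Measure Ω)]
    {𝒳 : Type*} [Fintype 𝒳] [DecidableEq 𝒳] [MeasurableSpace 𝒳]
    [MeasurableSingletonClass 𝒳]
    (d : ℕ) (hd : 1 ≤ d) (hcard : Fintype.card 𝒳 = d)
    (P : 𝒳 → ℝ) (hP0 : ∀ x, 0 ≤ P x) (hP1 : ∑ x, P x = 1)
    (ℓ : ℕ) (hℓ : 1 ≤ ℓ) (X : Fin ℓ → Ω → 𝒳)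
    (hmeas : ∀ j, Measurable (X j))
    (hindep : iIndepFun X ℙ)
    (hdist : ∀ j x, (ℙ {ω | X j ω = x}).toReal = P x)
    (ε : ℝ) (hε : 0 < ε) :
    (ℙ {ω | ε ≤ ∑ x, |P x -
        ((Finset.univ.filter (fun j => X j ω = x)).card : ℝ) / (ℓ : ℝ)|}).toReal
      ≤ 2 ^ d * Real.exp (-(ℓ : ℝ) * ε ^ 2 / 2) :=
  weissman_l1_deviation_general d hcard P hP1 ℓ hℓ X hmeas hindep hdist ε hε
end

section
/- Let 𝒳 be a finite set with |𝒳| = d ≥ 1, let P be a probability mass function on 𝒳, let ℓ ≥ 1, and let X₁, …, X_ℓ be independent random variables each distributed according to P, with empirical distribution P̂(x) := (1/ℓ)·#{j ≤ ℓ : X_j = x}. Then for every δ ∈ (0,1), the probability that ∑_{x ∈ 𝒳} |P(x) − P̂(x)| > √(2(d + log(1/δ))/ℓ) is at most δ. -/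
/-!
With `σ_S = 1` on `S` and `-1` off `S`, the L1 distance `‖P̂ - P‖₁` is the largest of the
`2 ^ d` quantities `∑ₓ σ_S x (P̂ x - P x)`, and each of them is the average of `ℓ` independent
centred variables `σ_S (X_j) - E σ_S (X_j)` with values in an interval of length 2. Hoeffding's
inequality bounds the probability that one of them reaches `ε` by `exp (-ℓ ε² / 2)`, and the
union bound over `S` gives `2 ^ d exp (-ℓ ε² / 2) = (2 / e) ^ d δ ≤ δ` for the chosen `ε`.
-/

open MeasureTheory ProbabilityTheory Real Finset

section SignPattern

variable {α : Type*} [DecidableEq α]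

def signPattern (S : Finset α) (x : α) : ℝ := if x ∈ S then 1 else -1

lemma signPattern_mem_Icc (S : Finset α) (x : α) : signPattern S x ∈ Set.Icc (-1) 1 := by
  unfold signPattern; split_ifs <;> norm_num

lemma exists_sum_abs_eq_sum_signPattern_mul [Fintype α] (f : α → ℝ) :
    ∃ S : Finset α, ∑ x, |f x| = ∑ x, signPattern S x * f x := by
  refine ⟨univ.filter (fun x => 0 ≤ f x), sum_congr rfl fun x _ => ?_⟩
  by_cases hx : 0 ≤ f x
  · simp [signPattern, hx, abs_of_nonneg hx]
  · simp [signPattern, hx, abs_of_neg (not_le.1 hx)]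

end SignPattern

section Empirical

variable {α ι : Type*} [Fintype α] [DecidableEq α] [Fintype ι]

lemma sum_comp_eq_sum_card_fiber_mul (Y : ι → α) (g : α → ℝ) :
    ∑ j, g (Y j) = ∑ x, (#{j | Y j = x} : ℝ) * g x := by
  rw [← sum_fiberwise univ Y]
  refine sum_congr rfl fun x _ => ?_
  rw [sum_congr rfl fun j hj => by rw [(mem_filter.1 hj).2], sum_const, nsmul_eq_mul]

lemma sum_mul_empirical_sub (Y : ι → α) (P g : α → ℝ) (hι : Fintype.card ι ≠ 0) :
    ∑ x, g x * ((#{j | Y j = x} : ℝ) / Fintype.card ι - P x)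
      = (∑ j, (g (Y j) - ∑ x, P x * g x)) / Fintype.card ι := by
  have hι' : (Fintype.card ι : ℝ) ≠ 0 := by exact_mod_cast hι
  rw [eq_div_iff hι', sum_mul, sum_sub_distrib, sum_comp_eq_sum_card_fiber_mul, sum_const,
    card_univ, nsmul_eq_mul, mul_sum, ← sum_sub_distrib]
  refine sum_congr rfl fun x _ => ?_
  field_simp

end Empirical

section Hoeffding

variable {Ω α : Type*} [MeasurableSpace Ω] {μ : Measure Ω} [IsProbabilityMeasure μ]
  [Fintype α] [MeasurableSpace α] [MeasurableSingletonClass α]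

lemma integral_comp_eq_sum_mul {Y : Ω → α} (hY : Measurable Y) {P : α → ℝ}
    (hdist : ∀ x, μ.real {ω | Y ω = x} = P x) (g : α → ℝ) :
    ∫ ω, g (Y ω) ∂μ = ∑ x, P x * g x := by
  rw [← integral_map hY.aemeasurable (measurable_of_countable g).aestronglyMeasurable,
    integral_fintype Integrable.of_finite]
  refine sum_congr rfl fun x _ => ?_
  rw [map_measureReal_apply hY (measurableSet_singleton x), smul_eq_mul, ← hdist x]
  rfl

lemma measureReal_sum_comp_sub_ge_le {ι : Type*} [Fintype ι] {X : ι → Ω → α}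
    (hX : ∀ j, Measurable (X j)) (hindep : iIndepFun X μ) {P : α → ℝ}
    (hdist : ∀ j x, μ.real {ω | X j ω = x} = P x) {g : α → ℝ} {a b : ℝ}
    (hg : ∀ x, g x ∈ Set.Icc a b) {t : ℝ} (ht : 0 ≤ t) :
    μ.real {ω | t ≤ ∑ j, (g (X j ω) - ∑ x, P x * g x)}
      ≤ exp (-2 * t ^ 2 / (Fintype.card ι * (b - a) ^ 2)) := by
  have hsubG : ∀ j ∈ (univ : Finset ι),
      HasSubgaussianMGF (fun ω => g (X j ω) - ∑ x, P x * g x) ((‖b - a‖₊ / 2) ^ 2) μ := by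
    intro j _
    rw [← integral_comp_eq_sum_mul (hX j) (hdist j)]
    exact hasSubgaussianMGF_of_mem_Icc ((measurable_of_countable g).comp (hX j)).aemeasurable
      (ae_of_all _ fun ω => hg _)
  have hcompindep : iIndepFun (fun j ω => g (X j ω) - ∑ x, P x * g x) μ :=
    hindep.comp (fun _ x => g x - ∑ x, P x * g x) fun _ => measurable_of_countable _
  refine (HasSubgaussianMGF.measure_sum_ge_le_of_iIndepFun hcompindep hsubG ht).trans_eq ?_
  rw [sum_const, card_univ, nsmul_eq_mul]
  push_cast
  rw [Real.norm_eq_abs, div_pow, sq_abs]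
  generalize (b - a) ^ 2 = c
  congr 1
  ring

end Hoeffding

lemma setOf_lt_sum_abs_sub_empirical_subset {Ω α ι : Type*} [Fintype α] [DecidableEq α]
    [Fintype ι] (hι : Fintype.card ι ≠ 0) (X : ι → Ω → α) (P : α → ℝ) (ε : ℝ) :
    {ω | ε < ∑ x, |P x - (#{j | X j ω = x} : ℝ) / Fintype.card ι|}
      ⊆ ⋃ S : Finset α, {ω | Fintype.card ι * ε
          ≤ ∑ j, (signPattern S (X j ω) - ∑ x, P x * signPattern S x)} := by
  intro ω (hω : ε < _)
  obtain ⟨S, hS⟩ :=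
    exists_sum_abs_eq_sum_signPattern_mul fun x => (#{j | X j ω = x} : ℝ) / Fintype.card ι - P x
  have hε : ε < (∑ j, (signPattern S (X j ω) - ∑ x, P x * signPattern S x)) / Fintype.card ι := by
    rw [← sum_mul_empirical_sub _ _ _ hι, ← hS]
    simpa only [abs_sub_comm] using hω
  rw [lt_div_iff₀' (by positivity)] at hε
  exact Set.mem_iUnion.2 ⟨S, hε.le⟩

lemma two_pow_mul_exp_neg_le_one (n : ℕ) : (2 : ℝ) ^ n * exp (-n) ≤ 1 := by
  rw [exp_neg, mul_inv_le_iff₀ (exp_pos _), one_mul, ← exp_one_pow]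
  exact pow_le_pow_left₀ zero_le_two (by linarith [add_one_le_exp 1]) n

theorem l1_deviation_high_probability_general
    {Ω : Type*} [MeasureSpace Ω] [IsProbabilityMeasure (ℙ : Measure Ω)]
    {𝒳 : Type*} [Fintype 𝒳] [DecidableEq 𝒳] [MeasurableSpace 𝒳]
    [MeasurableSingletonClass 𝒳]
    (d : ℕ) (hcard : Fintype.card 𝒳 = d)
    (P : 𝒳 → ℝ)
    (ℓ : ℕ) (hℓ : 1 ≤ ℓ) (X : Fin ℓ → Ω → 𝒳)
    (hmeas : ∀ j, Measurable (X j))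
    (hindep : iIndepFun X ℙ)
    (hdist : ∀ j x, (ℙ {ω | X j ω = x}).toReal = P x)
    (δ : ℝ) (hδ0 : 0 < δ) (hδ1 : δ < 1) :
    (ℙ {ω | Real.sqrt (2 * ((d : ℝ) + Real.log (1 / δ)) / (ℓ : ℝ))
        < ∑ x, |P x -
          ((Finset.univ.filter (fun j => X j ω = x)).card : ℝ) / (ℓ : ℝ)|}).toReal
      ≤ δ := by
  have hℓ0 : (0 : ℝ) < ℓ := by exact_mod_cast hℓ
  have hL : 0 ≤ log (1 / δ) := log_nonneg (one_le_one_div hδ0 hδ1.le)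
  set ε := √(2 * (d + log (1 / δ)) / ℓ) with hε
  have hexponent : -2 * (ℓ * ε) ^ 2 / (ℓ * (1 - -1) ^ 2) = -(d + log (1 / δ)) := by
    rw [mul_pow, hε, sq_sqrt (by positivity)]
    field_simp
    ring
  have hsubset := setOf_lt_sum_abs_sub_empirical_subset (by rw [Fintype.card_fin]; omega) X P ε
  rw [Fintype.card_fin] at hsubset
  calc (ℙ _).toReal
      ≤ ∑ S : Finset 𝒳, (ℙ : Measure Ω).real {ω | ℓ * ε
          ≤ ∑ j, (signPattern S (X j ω) - ∑ x, P x * signPattern S x)} :=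
        (measureReal_mono hsubset).trans (measureReal_iUnion_fintype_le _)
    _ ≤ ∑ _S : Finset 𝒳, exp (-(d + log (1 / δ))) := sum_le_sum fun S _ => by
        have := measureReal_sum_comp_sub_ge_le hmeas hindep hdist (signPattern_mem_Icc S)
          (t := ℓ * ε) (by positivity)
        rwa [Fintype.card_fin, hexponent] at this
    _ = 2 ^ d * exp (-d) * δ := by
        rw [sum_const, card_univ, Fintype.card_finset, hcard, nsmul_eq_mul, neg_add, exp_add,
          one_div, log_inv, neg_neg, exp_log hδ0]
        push_cast
        ring
    _ ≤ δ := mul_le_of_le_one_left hδ0.le (two_pow_mul_exp_neg_le_one d)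

/-- High-probability form of the L1-deviation bound: if `X₁, …, X_ℓ` are
i.i.d. samples from a probability mass function `P` on a finite set of
cardinality `d ≥ 1`, and `P̂` is the empirical distribution, then for every
`δ ∈ (0,1)`, `ℙ(‖P − P̂‖₁ > √(2(d + log(1/δ))/ℓ)) ≤ δ`. -/
theorem l1_deviation_high_probability
    {Ω : Type*} [MeasureSpace Ω] [IsProbabilityMeasure (ℙ : Measure Ω)]
    {𝒳 : Type*} [Fintype 𝒳] [DecidableEq 𝒳] [MeasurableSpace 𝒳]
    [MeasurableSingletonClass 𝒳]
    (d : ℕ) (hd : 1 ≤ d) (hcard : Fintype.card 𝒳 = d)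
    (P : 𝒳 → ℝ) (hP0 : ∀ x, 0 ≤ P x) (hP1 : ∑ x, P x = 1)
    (ℓ : ℕ) (hℓ : 1 ≤ ℓ) (X : Fin ℓ → Ω → 𝒳)
    (hmeas : ∀ j, Measurable (X j))
    (hindep : iIndepFun X ℙ)
    (hdist : ∀ j x, (ℙ {ω | X j ω = x}).toReal = P x)
    (δ : ℝ) (hδ0 : 0 < δ) (hδ1 : δ < 1) :
    (ℙ {ω | Real.sqrt (2 * ((d : ℝ) + Real.log (1 / δ)) / (ℓ : ℝ))
        < ∑ x, |P x -
          ((Finset.univ.filter (fun j => X j ω = x)).card : ℝ) / (ℓ : ℝ)|}).toReal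
      ≤ δ :=
  l1_deviation_high_probability_general d hcard P ℓ hℓ X hmeas hindep hdist δ hδ0 hδ1
end

section
/- Fix n ≥ 2 and p ∈ [0, 1/(n−1)], and let states be {1, …, n} with the usual order. Define the row-stochastic matrices P₀ and P₁ by: P₀(1,1) = 1; for x ≥ 2, P₀(x, 1) = 1 − (n−1)p, P₀(x, y) = p for 2 ≤ y ≤ x−1, and P₀(x, x) = (n−x+1)p, all other entries 0; and P₁(x, x) = (n−x)p and P₁(x, n) = 1 − (n−x)p for every x (so P₁(n, n) = 1), all other entries 0. For a ∈ {0,1}, define q_a(x' | x) := ∑_{z ≥ x'} P_a(x, z). Then: (i) both P₀ and P₁ have nonnegative entries and rows summing to 1; (ii) for each x' and each a, q_a(x' | x) is nondecreasing in x; (iii) for each x and x', q₁(x' | x) ≥ q₀(x' | x); and (iv) for each x', q is superadditive on {1,…,n} × {0,1}, i.e., for x₁ ≥ x₂, q₁(x' | x₁) + q₀(x' | x₂) ≥ q₀(x' | x₁) + q₁(x' | x₂). -/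
open Finset

/-- Tail function `q(x' | x) = ∑_{z ≥ x'} P(x, z)` of a transition matrix. -/
noncomputable def tailFun {n : ℕ} (P : Fin n → Fin n → ℝ) (x' x : Fin n) : ℝ :=
  ∑ z ∈ Finset.univ.filter (fun z => x' ≤ z), P x z

/-- Model 4, passive action (states `{1,…,n}` encoded as `Fin n`, state `x`
corresponding to index `x−1`): state 1 is absorbing; a state `x ≥ 2` resets to
state 1 with probability `1 − (n−1)p`, moves to each state `2 ≤ y ≤ x−1` with
probability `p`, and stays put with probability `(n−x+1)p`. -/
noncomputable def model4P0 (n : ℕ) (p : ℝ) : Fin n → Fin n → ℝ := fun x y =>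
  if x.val = 0 then (if y.val = 0 then 1 else 0)
  else if y.val = 0 then 1 - ((n : ℝ) - 1) * p
  else if y.val < x.val then p
  else if y = x then ((n : ℝ) - x.val) * p
  else 0

/-- Model 4, active (maintenance) action: state `x` stays put with probability
`(n−x)p` and jumps to the best state `n` with probability `1 − (n−x)p`
(so state `n` is absorbing). -/
noncomputable def model4P1 (n : ℕ) (p : ℝ) : Fin n → Fin n → ℝ := fun x y =>
  (if y = x then ((n : ℝ) - 1 - x.val) * p else 0)
    + (if y.val = n - 1 then 1 - ((n : ℝ) - 1 - x.val) * p else 0)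

/-! In the paper's indexing, both tails have closed forms: `q₁(x' | x) = 1` for `x' ≤ x` and
`1 − (n − x)p` otherwise, while `q₀(x' | x) = (n − x' + 1)p · [x' ≤ x]` for `x' ≥ 2` (and `1`
for `x' = 1`, the row sums). Every claim is then a comparison of these piecewise-linear
expressions, using only `0 ≤ p` and `(n − 1)p ≤ 1`. -/

lemma tailFun_eq_sum_Ici {n : ℕ} (P : Fin n → Fin n → ℝ) (x' x : Fin n) :
    tailFun P x' x = ∑ z ∈ Ici x', P x z := by
  rw [tailFun, filter_le_eq_Ici]

lemma tailFun_of_val_eq_zero {n : ℕ} (P : Fin n → Fin n → ℝ) {x' : Fin n} (hx' : x'.val = 0)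
    (x : Fin n) : tailFun P x' x = ∑ z, P x z := by
  rw [tailFun, filter_true_of_mem fun z _ => Fin.le_def.2 (by omega)]

lemma sum_eq_tailFun_add_sum_Iio {n : ℕ} (P : Fin n → Fin n → ℝ) (x' x : Fin n) :
    ∑ z, P x z = tailFun P x' x + ∑ z ∈ Iio x', P x z := by
  rw [tailFun, ← sum_filter_add_sum_filter_not univ (x' ≤ ·)]
  simp only [not_le, filter_gt_eq_Iio]

lemma mul_le_one_of_le_one_div {a p : ℝ} (hp0 : 0 ≤ p) (hp : p ≤ 1 / a) : a * p ≤ 1 := by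
  rcases le_or_gt a 0 with ha | ha
  · nlinarith
  · rwa [le_div_iff₀ ha, mul_comm] at hp

section Model4

variable {n : ℕ} {p : ℝ}

lemma model4P0_nonneg (hp0 : 0 ≤ p) (hp : ((n : ℝ) - 1) * p ≤ 1) (x y : Fin n) :
    0 ≤ model4P0 n p x y := by
  have hx : (x.val : ℝ) + 1 ≤ n := by exact_mod_cast x.isLt
  unfold model4P0
  split_ifs <;> first | linarith | exact mul_nonneg (by linarith) hp0

lemma model4P1_nonneg (hp0 : 0 ≤ p) (hp : ((n : ℝ) - 1) * p ≤ 1) (x y : Fin n) :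
    0 ≤ model4P1 n p x y := by
  have hx : (x.val : ℝ) + 1 ≤ n := by exact_mod_cast x.isLt
  have hstay : 0 ≤ ((n : ℝ) - 1 - x.val) * p := mul_nonneg (by linarith) hp0
  have hjump : ((n : ℝ) - 1 - x.val) * p ≤ 1 := by nlinarith
  unfold model4P1
  split_ifs <;> linarith

lemma model4P0_of_val_ne_zero (x : Fin n) {z : Fin n} (hz : z.val ≠ 0) :
    model4P0 n p x z
      = (if z ∈ Iio x then p else 0) + (if z = x then ((n : ℝ) - x.val) * p else 0) := by
  have hzx : z = x ↔ z.val = x.val := Fin.ext_iff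
  by_cases hx : x.val = 0 <;> by_cases hlt : z.val < x.val <;>
    simp [model4P0, Fin.lt_def, hx, hz, hlt, hzx]; omega

lemma tailFun_model4P0_of_val_ne_zero {x' : Fin n} (hx' : x'.val ≠ 0) (x : Fin n) :
    tailFun (model4P0 n p) x' x = if x' ≤ x then ((n : ℝ) - x'.val) * p else 0 := by
  have hrow : ∀ z ∈ Ici x', model4P0 n p x z
      = (if z ∈ Iio x then p else 0) + (if z = x then ((n : ℝ) - x.val) * p else 0) :=
    fun z hz => model4P0_of_val_ne_zero x (by have := Fin.le_def.1 (mem_Ici.1 hz); omega)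
  have hIco : Ici x' ∩ Iio x = Ico x' x := by ext; simp
  rw [tailFun_eq_sum_Ici, sum_congr rfl hrow, sum_add_distrib, sum_ite_mem, sum_ite_eq', hIco,
    sum_const, Fin.card_Ico, nsmul_eq_mul]
  simp only [mem_Ici]
  split_ifs with hle
  · rw [Nat.cast_sub hle]
    ring
  · have : x.val - x'.val = 0 := by have := Fin.le_def.not.1 hle; omega
    simp [this]

lemma sum_model4P0 (x : Fin n) : ∑ y, model4P0 n p x y = 1 := by
  by_cases hx : x.val = 0
  · rw [sum_eq_single_of_mem x (mem_univ x)]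
    · simp [model4P0, hx]
    · intro y _ hyx
      have hy : y.val ≠ 0 := fun hy => hyx (Fin.ext (hy.trans hx.symm))
      simp [model4P0, hx, hy]
  · -- the row is its reset entry plus its tail from state 2
    let zero : Fin n := ⟨0, x.pos⟩
    let one : Fin n := ⟨1, by omega⟩
    have hIio : Iio one = {zero} := by ext z; simp [one, zero, Fin.lt_def, Fin.ext_iff]
    have hone : one ≤ x := Fin.le_def.2 (by simp [one]; omega)
    rw [sum_eq_tailFun_add_sum_Iio _ one, tailFun_model4P0_of_val_ne_zero (by simp [one]),
      if_pos hone, hIio, sum_singleton]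
    simp [model4P0, zero, one, hx]

lemma tailFun_model4P0 (x' x : Fin n) :
    tailFun (model4P0 n p) x' x
      = if x'.val = 0 then 1 else if x' ≤ x then ((n : ℝ) - x'.val) * p else 0 := by
  split_ifs with hx' hle
  · rw [tailFun_of_val_eq_zero _ hx', sum_model4P0]
  · rw [tailFun_model4P0_of_val_ne_zero hx', if_pos hle]
  · rw [tailFun_model4P0_of_val_ne_zero hx', if_neg hle]

lemma tailFun_model4P1 (x' x : Fin n) :
    tailFun (model4P1 n p) x' x = if x' ≤ x then 1 else 1 - ((n : ℝ) - 1 - x.val) * p := by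
  let last : Fin n := ⟨n - 1, Nat.sub_one_lt_of_lt x.isLt⟩
  have hlast : last ∈ Ici x' := mem_Ici.2 (Fin.le_def.2 (Nat.le_sub_one_of_lt x'.isLt))
  have hjump : ∑ z ∈ Ici x', (if z.val = n - 1 then 1 - ((n : ℝ) - 1 - x.val) * p else 0)
      = 1 - ((n : ℝ) - 1 - x.val) * p := by
    rw [sum_eq_single_of_mem last hlast fun z _ hz => if_neg fun h => hz (Fin.ext h)]
    simp [last]
  rw [tailFun_eq_sum_Ici]
  simp only [model4P1]
  rw [sum_add_distrib, sum_ite_eq', hjump]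
  simp only [mem_Ici]
  split_ifs <;> ring

lemma sum_model4P1 (x : Fin n) : ∑ y, model4P1 n p x y = 1 := by
  rw [← tailFun_of_val_eq_zero _ (x' := ⟨0, x.pos⟩) rfl, tailFun_model4P1,
    if_pos (Fin.le_def.2 (Nat.zero_le _))]

lemma monotone_tailFun_model4P0 (hp0 : 0 ≤ p) (x' : Fin n) :
    Monotone (tailFun (model4P0 n p) x') := by
  intro a b hab
  have hx' : (x'.val : ℝ) + 1 ≤ n := by exact_mod_cast x'.isLt
  simp only [tailFun_model4P0]
  split_ifs with _ ha hb hb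
  · rfl
  · rfl
  · exact absurd (ha.trans hab) hb
  · exact mul_nonneg (by linarith) hp0
  · rfl

lemma monotone_tailFun_model4P1 (hp0 : 0 ≤ p) (x' : Fin n) :
    Monotone (tailFun (model4P1 n p) x') := by
  intro a b hab
  have hab' : (a.val : ℝ) ≤ b.val := by exact_mod_cast hab
  have hb' : (b.val : ℝ) + 1 ≤ n := by exact_mod_cast b.isLt
  simp only [tailFun_model4P1]
  split_ifs with ha hb
  · rfl
  · exact absurd (ha.trans hab) hb
  · nlinarith
  · nlinarith

lemma tailFun_model4P0_le_model4P1 (hp0 : 0 ≤ p) (hp : ((n : ℝ) - 1) * p ≤ 1) (x' x : Fin n) :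
    tailFun (model4P0 n p) x' x ≤ tailFun (model4P1 n p) x' x := by
  have hx : (x.val : ℝ) + 1 ≤ n := by exact_mod_cast x.isLt
  rw [tailFun_model4P0, tailFun_model4P1]
  by_cases hx'0 : x'.val = 0
  · rw [if_pos hx'0, if_pos (Fin.le_def.2 (by omega))]
  have hx' : (1 : ℝ) ≤ x'.val := by exact_mod_cast Nat.one_le_iff_ne_zero.2 hx'0
  rw [if_neg hx'0]
  split_ifs <;> nlinarith

lemma tailFun_model4P0_add_model4P1_le (hp0 : 0 ≤ p) (x' : Fin n) {x₁ x₂ : Fin n}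
    (h21 : x₂ ≤ x₁) :
    tailFun (model4P0 n p) x' x₁ + tailFun (model4P1 n p) x' x₂
      ≤ tailFun (model4P1 n p) x' x₁ + tailFun (model4P0 n p) x' x₂ := by
  simp only [tailFun_model4P0, tailFun_model4P1]
  by_cases hx'0 : x'.val = 0
  · have hle : ∀ x : Fin n, x' ≤ x := fun x => Fin.le_def.2 (by omega)
    simp [hx'0, hle]
  rw [if_neg hx'0, if_neg hx'0]
  by_cases h2 : x' ≤ x₂
  · simp [h2, h2.trans h21, add_comm]
  have h2' : (x₂.val : ℝ) + 1 ≤ x'.val := by exact_mod_cast Fin.lt_def.1 (not_le.1 h2)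
  have h21' : (x₂.val : ℝ) ≤ x₁.val := by exact_mod_cast h21
  by_cases h1 : x' ≤ x₁
  · simp only [h1, h2, if_true, if_false]
    nlinarith
  · simp only [h1, h2, if_false]
    nlinarith

end Model4

theorem model4_tail_conditions_general (n : ℕ) (p : ℝ)
    (hp0 : 0 ≤ p) (hp1 : p ≤ 1 / ((n : ℝ) - 1)) :
    ((∀ x y : Fin n, 0 ≤ model4P0 n p x y) ∧ (∀ x : Fin n, ∑ y, model4P0 n p x y = 1)
      ∧ (∀ x y : Fin n, 0 ≤ model4P1 n p x y) ∧ (∀ x : Fin n, ∑ y, model4P1 n p x y = 1))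
    ∧ (∀ x' : Fin n, Monotone (tailFun (model4P0 n p) x')
        ∧ Monotone (tailFun (model4P1 n p) x'))
    ∧ (∀ x' x : Fin n,
        tailFun (model4P0 n p) x' x ≤ tailFun (model4P1 n p) x' x)
    ∧ (∀ x' x₁ x₂ : Fin n, x₂ ≤ x₁ →
        tailFun (model4P0 n p) x' x₁ + tailFun (model4P1 n p) x' x₂
          ≤ tailFun (model4P1 n p) x' x₁ + tailFun (model4P0 n p) x' x₂) := by
  have hp : ((n : ℝ) - 1) * p ≤ 1 := mul_le_one_of_le_one_div hp0 hp1
  exact ⟨⟨model4P0_nonneg hp0 hp, sum_model4P0, model4P1_nonneg hp0 hp, sum_model4P1⟩,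
    fun x' => ⟨monotone_tailFun_model4P0 hp0 x', monotone_tailFun_model4P1 hp0 x'⟩,
    tailFun_model4P0_le_model4P1 hp0 hp,
    fun x' _ _ h21 => tailFun_model4P0_add_model4P1_le hp0 x' h21⟩

/-- Model 4 of the appendix (machine maintenance) satisfies: (i) both matrices
are row-stochastic; (ii) the tail `q_a(x' | ·)` is nondecreasing in the state
for each action; (iii) the tail is nondecreasing in the action; (iv) the tail
is superadditive on state × action. -/
theorem model4_tail_conditions (n : ℕ) (hn : 2 ≤ n) (p : ℝ)
    (hp0 : 0 ≤ p) (hp1 : p ≤ 1 / ((n : ℝ) - 1)) :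
    ((∀ x y : Fin n, 0 ≤ model4P0 n p x y) ∧ (∀ x : Fin n, ∑ y, model4P0 n p x y = 1)
      ∧ (∀ x y : Fin n, 0 ≤ model4P1 n p x y) ∧ (∀ x : Fin n, ∑ y, model4P1 n p x y = 1))
    ∧ (∀ x' : Fin n, Monotone (tailFun (model4P0 n p) x')
        ∧ Monotone (tailFun (model4P1 n p) x'))
    ∧ (∀ x' x : Fin n,
        tailFun (model4P0 n p) x' x ≤ tailFun (model4P1 n p) x' x)
    ∧ (∀ x' x₁ x₂ : Fin n, x₂ ≤ x₁ →
        tailFun (model4P0 n p) x' x₁ + tailFun (model4P1 n p) x' x₂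
          ≤ tailFun (model4P1 n p) x' x₁ + tailFun (model4P0 n p) x' x₂) :=
  model4_tail_conditions_general n p hp0 hp1
end

section
/- Let K ≥ 1 and T ≥ 1 be natural numbers, let S be a finite set, and let z : {1,…,K} × {0,…,T−1} → S be any function (a sequence of visited elements over K episodes of length T). For each episode k and s ∈ S, let N_k(s) := #{(κ, τ) : 1 ≤ κ ≤ k−1, 0 ≤ τ ≤ T−1, z(κ, τ) = s} be the number of occurrences of s in episodes strictly before k. Then the number of pairs (k, t) with 1 ≤ k ≤ K and 0 ≤ t ≤ T−1 such that N_k(z(k, t)) ≤ T is at most 2·T·|S|. -/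
/-!
Fix `s ∈ S` and let `(k*, t*)` be a low-count visit of `s` in the latest possible episode.
Every low-count visit of `s` either lies in an episode before `k*`, and is then counted by
`N_{k*}(s) ≤ T`, or lies in episode `k*`, which has only `T` steps. Summing over `s` gives `2T|S|`.
-/

open Finset

section EpisodeCounting

variable {α β : Type*} [LinearOrder α] [Fintype β]

theorem card_filter_fst_eq_le (A : Finset (α × β)) (x : α) :
    #{b ∈ A | b.1 = x} ≤ Fintype.card β :=
  (card_le_card_of_injOn Prod.snd (fun _ _ => mem_univ _) fun _ ha _ hb hab =>
    Prod.ext ((mem_filter.1 ha).2.trans (mem_filter.1 hb).2.symm) hab).trans_eq card_univ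

theorem card_le_of_card_filter_fst_lt_le {A : Finset (α × β)} {n : ℕ}
    (h : ∀ a ∈ A, #{b ∈ A | b.1 < a.1} ≤ n) : #A ≤ n + Fintype.card β := by
  rcases A.eq_empty_or_nonempty with rfl | hA
  · simp
  obtain ⟨m, hm, hmax⟩ := A.exists_max_image Prod.fst hA
  have hlast : {b ∈ A | ¬b.1 < m.1} ⊆ {b ∈ A | b.1 = m.1} := fun b hb => by
    rw [mem_filter] at hb ⊢
    exact ⟨hb.1, le_antisymm (hmax b hb.1) (not_lt.1 hb.2)⟩
  calc #A = #{b ∈ A | b.1 < m.1} + #{b ∈ A | ¬b.1 < m.1} :=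
        (card_filter_add_card_filter_not _).symm
    _ ≤ n + Fintype.card β :=
        add_le_add (h m hm) ((card_le_card hlast).trans (card_filter_fst_eq_le A m.1))

end EpisodeCounting

theorem low_visit_count_steps_bound_general
    (K T : ℕ)
    {S : Type*} [Fintype S] [DecidableEq S]
    (z : Fin K → Fin T → S) :
    (Finset.univ.filter (fun kt : Fin K × Fin T =>
        (Finset.univ.filter (fun κτ : Fin K × Fin T =>
            κτ.1 < kt.1 ∧ z κτ.1 κτ.2 = z kt.1 kt.2)).card ≤ T)).card
      ≤ 2 * T * Fintype.card S := by
  set low := Finset.univ.filter (fun kt : Fin K × Fin T =>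
    (Finset.univ.filter (fun κτ : Fin K × Fin T =>
      κτ.1 < kt.1 ∧ z κτ.1 κτ.2 = z kt.1 kt.2)).card ≤ T)
  have fiber_le (s : S) : #{kt ∈ low | z kt.1 kt.2 = s} ≤ T + Fintype.card (Fin T) := by
    refine card_le_of_card_filter_fst_lt_le fun a ha => ?_
    obtain ⟨ha_low, ha_s⟩ := mem_filter.1 ha
    refine le_trans (card_le_card fun b hb => ?_) (mem_filter.1 ha_low).2
    simp only [mem_filter] at hb ⊢
    exact ⟨mem_univ b, hb.2, hb.1.2.trans ha_s.symm⟩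
  calc #low = ∑ s : S, #{kt ∈ low | z kt.1 kt.2 = s} :=
        card_eq_sum_card_fiberwise fun _ _ => mem_univ _
    _ ≤ ∑ _s : S, (T + Fintype.card (Fin T)) := sum_le_sum fun s _ => fiber_le s
    _ = 2 * T * Fintype.card S := by
        rw [sum_const, card_univ, Fintype.card_fin, smul_eq_mul]; ring

/-- Over `K` episodes of length `T`, the number of time steps `(k, t)` at which
the visit count (in strictly earlier episodes) of the currently visited element
`z(k, t)` is at most `T` is bounded by `2·T·|S|`. -/
theorem low_visit_count_steps_bound
    (K T : ℕ) (hK : 1 ≤ K) (hT : 1 ≤ T)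
    {S : Type*} [Fintype S] [DecidableEq S]
    (z : Fin K → Fin T → S) :
    (Finset.univ.filter (fun kt : Fin K × Fin T =>
        (Finset.univ.filter (fun κτ : Fin K × Fin T =>
            κτ.1 < kt.1 ∧ z κτ.1 κτ.2 = z kt.1 kt.2)).card ≤ T)).card
      ≤ 2 * T * Fintype.card S :=
  low_visit_count_steps_bound_general K T z
end
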